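/- For a convex function f on a convex feasible set F, any local minimizer subject to being in F is a global minimizer; applied here: if the error probability P_{e_k} restricted to the feasible set {‖w‖₂ = 1, all Q-arguments ≥ 0} has a local minimizer, it is a global minimizer of the constrained problem. -/

import Mathlib

open MeasureTheory

/-- The Gaussian Q-function. -/
noncomputable def gaussQ (x : ℝ) : ℝ :=
  (1 / Real.sqrt (2 * Real.pi)) * ∫ u in Set.Ioi x, Real.exp (-u ^ 2 / 2)

/-! Given feasible `w₀` and `w`, the chord `(1 - t) • w₀ + t • w` has norm at most `1`, so its
radial projection `γ t` onto the unit sphere only enlarges the (nonnegative) linear `Q`-arguments,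
which are therefore at least the convex combinations of those of `w₀` and `w`. As `Q` is
decreasing and convex on `[0, ∞)`, `P (γ t) ≤ (1 - t) P w₀ + t P w`; since `γ t → w₀` inside the
feasible set, local minimality gives `P w₀ ≤ (1 - t) P w₀ + t P w` for some `t > 0`,
hence `P w₀ ≤ P w`. -/

open Set Filter Topology Real AffineMap

theorem le_of_isLocalMinOn_of_tendsto {X : Type*} [TopologicalSpace X] {F : Set X}
    {P : X → ℝ} {x₀ x : X} (hmin : IsLocalMinOn P F x₀) {γ : ℝ → X}
    (hγ : Tendsto γ (𝓝[>] 0) (𝓝[F] x₀))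
    (hchord : ∀ᶠ t in 𝓝[>] 0, P (γ t) ≤ (1 - t) * P x₀ + t * P x) :
    P x₀ ≤ P x := by
  obtain ⟨t, hmin_t, hchord_t, ht⟩ :=
    ((hγ.eventually hmin).and (hchord.and self_mem_nhdsWithin)).exists
  nlinarith

theorem ConvexOn.le_of_antitoneOn_Ici {f : ℝ → ℝ} (hf : ConvexOn ℝ (Ici 0) f)
    (hf' : AntitoneOn f (Ici 0)) {a b c t : ℝ} (ha : 0 ≤ a) (hb : 0 ≤ b) (ht : t ∈ Icc 0 1)
    (hc : (1 - t) * a + t * b ≤ c) : f c ≤ (1 - t) * f a + t * f b := by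
  have hab : 0 ≤ (1 - t) * a + t * b :=
    add_nonneg (mul_nonneg (sub_nonneg.2 ht.2) ha) (mul_nonneg ht.1 hb)
  calc f c ≤ f ((1 - t) * a + t * b) := hf' hab (hab.trans hc) hc
    _ ≤ (1 - t) * f a + t * f b := hf.2 ha hb (by linarith [ht.2]) ht.1 (by ring)

theorem ConvexOn.const_mul_comp_div {f : ℝ → ℝ} (hf : ConvexOn ℝ (Ici 0) f) {C d : ℝ}
    (hC : 0 ≤ C) (hd : 0 < d) : ConvexOn ℝ (Ici 0) fun x => C * f (x / d) := by
  refine ⟨convex_Ici 0, fun x hx y hy a b ha hb hab => ?_⟩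
  have hscaled := hf.2 (div_nonneg hx hd.le) (div_nonneg hy hd.le) ha hb hab
  simp only [smul_eq_mul] at hscaled ⊢
  calc C * f ((a * x + b * y) / d) = C * f (a * (x / d) + b * (y / d)) := by ring_nf
    _ ≤ C * (a * f (x / d) + b * f (y / d)) := by gcongr
    _ = a * (C * f (x / d)) + b * (C * f (y / d)) := by ring

namespace Seminorm

variable {E : Type*} [AddCommGroup E] [Module ℝ E] (p : Seminorm ℝ E)

theorem apply_lineMap_le_one {x y : E} (hx : p x ≤ 1) (hy : p y ≤ 1) {t : ℝ}
    (ht : t ∈ Icc 0 1) : p (lineMap y x t) ≤ 1 := by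
  simpa using (p.convex_closedBall 0 1).lineMap_mem (by simpa using hy) (by simpa using hx) ht

noncomputable def normalizedLineMap (y x : E) (t : ℝ) : E :=
  (p (lineMap y x t))⁻¹ • lineMap y x t

theorem apply_normalizedLineMap {y x : E} {t : ℝ} (hpos : p (lineMap y x t) ≠ 0) :
    p (p.normalizedLineMap y x t) = 1 := by
  rw [normalizedLineMap, map_smul_eq_mul, Real.norm_eq_abs, abs_inv,
    abs_of_nonneg (apply_nonneg p _), inv_mul_cancel₀ hpos]

theorem le_apply_normalizedLineMap (ℓ : E →ₗ[ℝ] ℝ) {x y : E} (hx : p x ≤ 1) (hy : p y ≤ 1)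
    (hℓx : 0 ≤ ℓ x) (hℓy : 0 ≤ ℓ y) {t : ℝ} (ht : t ∈ Icc 0 1)
    (hpos : 0 < p (lineMap y x t)) :
    (1 - t) * ℓ y + t * ℓ x ≤ ℓ (p.normalizedLineMap y x t) := by
  have hℓ : 0 ≤ (1 - t) * ℓ y + t * ℓ x :=
    add_nonneg (mul_nonneg (sub_nonneg.2 ht.2) hℓy) (mul_nonneg ht.1 hℓx)
  have hℓline : ℓ (lineMap y x t) = (1 - t) * ℓ y + t * ℓ x := by
    simp only [lineMap_apply_module, map_add, map_smul, smul_eq_mul]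
  rw [normalizedLineMap, map_smul, smul_eq_mul, hℓline]
  exact le_mul_of_one_le_left hℓ ((one_le_inv₀ hpos).mpr (p.apply_lineMap_le_one hx hy ht))

def nonnegSphere {ι : Type*} (ℓ : ι → E →ₗ[ℝ] ℝ) : Set E := {w | p w = 1 ∧ ∀ i, 0 ≤ ℓ i w}

variable {ι : Type*} {ℓ : ι → E →ₗ[ℝ] ℝ} {x y : E} {t : ℝ}

theorem normalizedLineMap_mem_nonnegSphere (hx : x ∈ p.nonnegSphere ℓ)
    (hy : y ∈ p.nonnegSphere ℓ) (ht : t ∈ Icc 0 1) (hpos : 0 < p (lineMap y x t)) :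
    p.normalizedLineMap y x t ∈ p.nonnegSphere ℓ :=
  ⟨p.apply_normalizedLineMap hpos.ne', fun i =>
    (add_nonneg (mul_nonneg (sub_nonneg.2 ht.2) (hy.2 i)) (mul_nonneg ht.1 (hx.2 i))).trans
      (p.le_apply_normalizedLineMap (ℓ i) hx.1.le hy.1.le (hx.2 i) (hy.2 i) ht hpos)⟩

theorem sum_comp_normalizedLineMap_le [Fintype ι] {f : ℝ → ℝ} (hf : ConvexOn ℝ (Ici 0) f)
    (hf' : AntitoneOn f (Ici 0)) (hx : x ∈ p.nonnegSphere ℓ) (hy : y ∈ p.nonnegSphere ℓ)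
    (ht : t ∈ Icc 0 1) (hpos : 0 < p (lineMap y x t)) :
    ∑ i, f (ℓ i (p.normalizedLineMap y x t) / p (p.normalizedLineMap y x t)) ≤
      (1 - t) * ∑ i, f (ℓ i y / p y) + t * ∑ i, f (ℓ i x / p x) := by
  simp only [p.apply_normalizedLineMap hpos.ne', hx.1, hy.1, div_one, Finset.mul_sum,
    ← Finset.sum_add_distrib]
  exact Finset.sum_le_sum fun i _ => hf.le_of_antitoneOn_Ici hf' (hy.2 i) (hx.2 i) ht
    (p.le_apply_normalizedLineMap (ℓ i) hx.1.le hy.1.le (hx.2 i) (hy.2 i) ht hpos)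

variable [TopologicalSpace E] [IsTopologicalAddGroup E] [ContinuousSMul ℝ E]

theorem tendsto_normalizedLineMap (hp : Continuous p) (x : E) {y : E} (hy : p y = 1) :
    Tendsto (p.normalizedLineMap y x) (𝓝 0) (𝓝 y) := by
  have hline : Continuous (lineMap y x : ℝ → E) := lineMap_continuous
  have hcont : ContinuousAt (p.normalizedLineMap y x) 0 :=
    ((hp.comp hline).continuousAt.inv₀ (by simp [hy])).smul hline.continuousAt
  simpa [normalizedLineMap, hy] using hcont.tendsto

theorem isMinOn_of_isLocalMinOn_nonnegSphere [Fintype ι] (hp : Continuous p) {f : ℝ → ℝ}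
    (hf : ConvexOn ℝ (Ici 0) f) (hf' : AntitoneOn f (Ici 0)) {w₀ : E}
    (hw₀ : w₀ ∈ p.nonnegSphere ℓ)
    (hmin : IsLocalMinOn (fun w => ∑ i, f (ℓ i w / p w)) (p.nonnegSphere ℓ) w₀) :
    IsMinOn (fun w => ∑ i, f (ℓ i w / p w)) (p.nonnegSphere ℓ) w₀ := by
  rw [isMinOn_iff]
  intro w hw
  have hsmall : ∀ᶠ t in 𝓝[>] (0 : ℝ), t ∈ Icc 0 1 ∧ 0 < p (lineMap w₀ w t) := by
    have hcont : Continuous fun t : ℝ => p (lineMap w₀ w t) := hp.comp lineMap_continuous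
    have hpos : ∀ᶠ t in 𝓝 (0 : ℝ), 0 < p (lineMap w₀ w t) :=
      continuousAt_const.eventually_lt hcont.continuousAt (by simp [hw₀.1])
    filter_upwards [Ioc_mem_nhdsGT zero_lt_one, nhdsWithin_le_nhds hpos] with t ht hpos_t
    exact ⟨Ioc_subset_Icc_self ht, hpos_t⟩
  refine le_of_isLocalMinOn_of_tendsto (P := fun w => ∑ i, f (ℓ i w / p w)) hmin
    (γ := p.normalizedLineMap w₀ w) (tendsto_nhdsWithin_iff.mpr ⟨?_, ?_⟩) ?_
  · exact (p.tendsto_normalizedLineMap hp w hw₀.1).mono_left nhdsWithin_le_nhds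
  · exact hsmall.mono fun t ht => p.normalizedLineMap_mem_nonnegSphere hw hw₀ ht.1 ht.2
  · exact hsmall.mono fun t ht => p.sum_comp_normalizedLineMap_le hf hf' hw hw₀ ht.1 ht.2

end Seminorm

theorem integrable_exp_neg_sq_div_two : Integrable fun u : ℝ => Real.exp (-u ^ 2 / 2) := by
  simpa [div_eq_inv_mul, neg_div] using integrable_exp_neg_mul_sq (b := 1 / 2) (by norm_num)

theorem hasDerivAt_gaussQ (x : ℝ) :
    HasDerivAt gaussQ (-(1 / √(2 * π) * Real.exp (-x ^ 2 / 2))) x := by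
  have hint := integrable_exp_neg_sq_div_two
  have hsplit : gaussQ = fun y => 1 / √(2 * π) *
      ((∫ u in Ioi 0, Real.exp (-u ^ 2 / 2)) - ∫ u in (0 : ℝ)..y, Real.exp (-u ^ 2 / 2)) := by
    funext y
    rw [gaussQ, eq_sub_of_add_eq' (intervalIntegral.integral_interval_add_Ioi (a := 0)
      hint.integrableOn hint.integrableOn)]
  have hFTC : HasDerivAt (fun y => ∫ u in (0 : ℝ)..y, Real.exp (-u ^ 2 / 2))
      (Real.exp (-x ^ 2 / 2)) x :=
    intervalIntegral.integral_hasDerivAt_right hint.intervalIntegrable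
      hint.aestronglyMeasurable.stronglyMeasurableAtFilter (by fun_prop)
  rw [hsplit, ← mul_neg]
  exact (hFTC.const_sub _).const_mul _

theorem antitone_gaussQ : Antitone gaussQ := by
  refine antitone_of_deriv_nonpos (fun x => (hasDerivAt_gaussQ x).differentiableAt) fun x => ?_
  rw [(hasDerivAt_gaussQ x).deriv, neg_nonpos]
  positivity

theorem convexOn_gaussQ : ConvexOn ℝ (Ici 0) gaussQ := by
  have hdiff : Differentiable ℝ gaussQ := fun x => (hasDerivAt_gaussQ x).differentiableAt
  refine MonotoneOn.convexOn_of_deriv (convex_Ici 0) hdiff.continuous.continuousOn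
    hdiff.differentiableOn fun x hx y _ hxy => ?_
  rw [interior_Ici] at hx
  rw [(hasDerivAt_gaussQ x).deriv, (hasDerivAt_gaussQ y).deriv, neg_le_neg_iff]
  gcongr
  nlinarith [mem_Ioi.mp hx]

/-- The Euclidean norm, transported from `EuclideanSpace`: the `Norm` on `Fin N → ℂ` is the sup
norm. -/
noncomputable def euclideanSeminorm (N : ℕ) : Seminorm ℝ (Fin N → ℂ) :=
  (normSeminorm ℝ (EuclideanSpace ℂ (Fin N))).comp
    (WithLp.linearEquiv 2 ℝ (Fin N → ℂ)).symm.toLinearMap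

theorem euclideanSeminorm_apply {N : ℕ} (w : Fin N → ℂ) :
    euclideanSeminorm N w = √(∑ i, Complex.normSq (w i)) := by
  simp [euclideanSeminorm, EuclideanSpace.norm_eq, Complex.normSq_eq_norm_sq]

theorem continuous_euclideanSeminorm (N : ℕ) : Continuous (euclideanSeminorm N) := by
  simp only [funext euclideanSeminorm_apply]
  fun_prop

theorem mpe_localMin_is_globalMin_general (N K B : ℕ)
    (h : Fin N → ℂ) (H : Matrix (Fin N) (Fin K) ℂ)
    (a σz C : ℝ) (hσ : 0 < σz) (hC : 0 < C)
    (s : Fin B → Fin K → ℝ)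
    (arg : (Fin N → ℂ) → Fin B → ℝ)
    (harg : ∀ w b, arg w b =
      ((∑ i, w i * h i) * (a : ℂ) - ∑ i, w i * ∑ j, H i j * (s b j : ℂ)).re)
    (F : Set (Fin N → ℂ))
    (hF : F = {w : Fin N → ℂ |
      Real.sqrt (∑ i, Complex.normSq (w i)) = 1 ∧ ∀ b, 0 ≤ arg w b})
    (P : (Fin N → ℂ) → ℝ)
    (hP : ∀ w, P w = C * ∑ b : Fin B,
      gaussQ (arg w b / ((σz / Real.sqrt 2) * Real.sqrt (∑ i, Complex.normSq (w i)))))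
    (w₀ : Fin N → ℂ) (hw₀ : w₀ ∈ F) (hloc : IsLocalMinOn P F w₀) :
    ∀ w ∈ F, P w₀ ≤ P w := by
  have hlin : ∀ b, IsLinearMap ℝ (arg · b) := fun b =>
    { map_add := fun u v => by
        simp only [harg, Pi.add_apply, add_mul, Finset.sum_add_distrib, Complex.add_re,
          Complex.sub_re]
        ring
      map_smul := fun r u => by
        simp only [harg, Pi.smul_apply, Complex.real_smul, mul_assoc, ← Finset.mul_sum,
          ← mul_sub, Complex.re_ofReal_mul, smul_eq_mul] }
  set ℓ : Fin B → (Fin N → ℂ) →ₗ[ℝ] ℝ := fun b => IsLinearMap.mk' (arg · b) (hlin b)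
  set d := σz / √2
  have hd : 0 < d := by positivity
  have hanti : AntitoneOn (fun x => C * gaussQ (x / d)) (Ici 0) := fun x _ y _ hxy =>
    mul_le_mul_of_nonneg_left (antitone_gaussQ (div_le_div_of_nonneg_right hxy hd.le)) hC.le
  have hFeq : F = (euclideanSeminorm N).nonnegSphere ℓ := by
    simp [hF, Seminorm.nonnegSphere, euclideanSeminorm_apply, ℓ]
  have hPeq : P = fun w => ∑ b, C * gaussQ (ℓ b w / euclideanSeminorm N w / d) := by
    funext w
    simp [hP, Finset.mul_sum, euclideanSeminorm_apply, div_mul_eq_div_div_swap, ℓ]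
  subst hFeq hPeq
  exact isMinOn_iff.mp <| (euclideanSeminorm N).isMinOn_of_isLocalMinOn_nonnegSphere
    (continuous_euclideanSeminorm N) (convexOn_gaussQ.const_mul_comp_div hC.le hd) hanti hw₀ hloc

theorem mpe_localMin_is_globalMin (N K B : ℕ)
    (h : Fin N → ℂ) (H : Matrix (Fin N) (Fin K) ℂ)
    (a σz C : ℝ) (ha : 0 < a) (hσ : 0 < σz) (hC : 0 < C)
    (s : Fin B → Fin K → ℝ)
    (arg : (Fin N → ℂ) → Fin B → ℝ)
    (harg : ∀ w b, arg w b =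
      ((∑ i, w i * h i) * (a : ℂ) - ∑ i, w i * ∑ j, H i j * (s b j : ℂ)).re)
    (F : Set (Fin N → ℂ))
    (hF : F = {w : Fin N → ℂ |
      Real.sqrt (∑ i, Complex.normSq (w i)) = 1 ∧ ∀ b, 0 ≤ arg w b})
    (P : (Fin N → ℂ) → ℝ)
    (hP : ∀ w, P w = C * ∑ b : Fin B,
      gaussQ (arg w b / ((σz / Real.sqrt 2) * Real.sqrt (∑ i, Complex.normSq (w i)))))
    (w₀ : Fin N → ℂ) (hw₀ : w₀ ∈ F) (hloc : IsLocalMinOn P F w₀) :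
    ∀ w ∈ F, P w₀ ≤ P w :=
  mpe_localMin_is_globalMin_general N K B h H a σz C hσ hC s arg harg F hF P hP w₀ hw₀ hloc
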